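/- Identity principle from spherical zero-sequences: Let D ⊆ ℂ be a domain symmetric with respect to the real axis with D ∩ ℝ ≠ ∅, let Ω_D = {x + yI : x + yi ∈ D, I ∈ 𝕊} be its circularization, and let f be a slice regular function on Ω_D. Suppose there exists a sequence (p_n)_{n∈ℕ}, p_n = x_n + i y_n, of pairwise distinct points of D converging to a point of D, such that for every n there exists I_n ∈ 𝕊 with f(x_n + y_n I_n) = 0. Then f vanishes identically on Ω_D. -/

import Mathlib

open Quaternion MeasureTheory Metric Filter

noncomputable section

abbrev H4 := Quaternion ℝ

/-- The 2-sphere of quaternionic imaginary units. -/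
def Sph : Set H4 := {q : H4 | q ^ 2 = -1}

/-- A circular subset of the quaternions. -/
def IsCircular (Ω : Set H4) : Prop :=
  ∀ (x y : ℝ), ∀ I ∈ Sph, ∀ J ∈ Sph, (x : H4) + y • I ∈ Ω → (x : H4) + y • J ∈ Ω

/-- Slice functions: functions satisfying the representation formula on Ω. -/
def IsSliceOn (Ω : Set H4) (f : H4 → H4) : Prop :=
  ∀ (x y : ℝ), ∀ I ∈ Sph, ∀ J ∈ Sph, (x : H4) + y • I ∈ Ω →
    f ((x : H4) + y • J)
      = (1 - J * I) / 2 * f ((x : H4) + y • I) + (1 + J * I) / 2 * f ((x : H4) - y • I)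

/-- Slice regular functions on a circular set: slice, real differentiable,
and satisfying the Cauchy–Riemann equation on every slice. -/
def IsSliceRegularOn (Ω : Set H4) (f : H4 → H4) : Prop :=
  IsSliceOn Ω f ∧ DifferentiableOn ℝ f Ω ∧
    ∀ (x y : ℝ), ∀ I ∈ Sph, (x : H4) + y • I ∈ Ω →
      fderiv ℝ f ((x : H4) + y • I) 1 + I * fderiv ℝ f ((x : H4) + y • I) I = 0

/-- Anti-regular slice functions. -/
def IsAntiRegularOn (Ω : Set H4) (f : H4 → H4) : Prop :=
  IsSliceOn Ω f ∧ DifferentiableOn ℝ f Ω ∧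
    ∀ (x y : ℝ), ∀ I ∈ Sph, (x : H4) + y • I ∈ Ω →
      fderiv ℝ f ((x : H4) + y • I) 1 - I * fderiv ℝ f ((x : H4) + y • I) I = 0

/-- Slice Laplacian of `f` along the slice of `I`:
`∂²f/∂x² + ∂²f/∂y²` where derivatives are taken in the directions `1` and `I`. -/
def lapSlice (f : H4 → H4) (I q : H4) : H4 :=
  fderiv ℝ (fun p => fderiv ℝ f p 1) q 1 + fderiv ℝ (fun p => fderiv ℝ f p I) q I

/-- Slice Laplacian for real-valued functions. -/
def lapSliceR (u : H4 → ℝ) (I q : H4) : ℝ :=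
  fderiv ℝ (fun p => fderiv ℝ u p 1) q 1 + fderiv ℝ (fun p => fderiv ℝ u p I) q I

/-- The circularization Ω_D of a subset D of ℂ. -/
def circSet (D : Set ℂ) : Set H4 :=
  {q : H4 | ∃ (x y : ℝ), ∃ I ∈ Sph, (x + y * Complex.I) ∈ D ∧ q = (x : H4) + y • I}

namespace Work


def qi : H4 := ⟨0,1,0,0⟩
def qj : H4 := ⟨0,0,1,0⟩

@[simp] lemma qi_re : qi.re = 0 := rfl
@[simp] lemma qi_imI : qi.imI = 1 := rfl
@[simp] lemma qi_imJ : qi.imJ = 0 := rfl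
@[simp] lemma qi_imK : qi.imK = 0 := rfl
@[simp] lemma qj_re : qj.re = 0 := rfl
@[simp] lemma qj_imI : qj.imI = 0 := rfl
@[simp] lemma qj_imJ : qj.imJ = 1 := rfl
@[simp] lemma qj_imK : qj.imK = 0 := rfl

lemma mem_sph_iff {K : H4} : K ∈ Sph ↔ K.re = 0 ∧ K.imI^2 + K.imJ^2 + K.imK^2 = 1 := by
  constructor
  · intro h
    have h' : K * K = -1 := by rw [← sq]; exact h
    have h1 : K.re * K.re - K.imI*K.imI - K.imJ*K.imJ - K.imK*K.imK = -1 := by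
      have := congrArg QuaternionAlgebra.re h'
      simpa [Quaternion.re_mul] using this
    have h2 : K.re * K.imI + K.imI * K.re + K.imJ * K.imK - K.imK * K.imJ = 0 := by
      have := congrArg QuaternionAlgebra.imI h'
      simpa [Quaternion.imI_mul] using this
    have h3 : K.re * K.imJ - K.imI * K.imK + K.imJ * K.re + K.imK * K.imI = 0 := by
      have := congrArg QuaternionAlgebra.imJ h'
      simpa [Quaternion.imJ_mul] using this
    have h4 : K.re * K.imK + K.imI * K.imJ - K.imJ * K.imI + K.imK * K.re = 0 := by
      have := congrArg QuaternionAlgebra.imK h'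
      simpa [Quaternion.imK_mul] using this
    have h2' : K.re * K.imI = 0 := by linear_combination h2 / 2
    have h3' : K.re * K.imJ = 0 := by linear_combination h3 / 2
    have h4' : K.re * K.imK = 0 := by linear_combination h4 / 2
    have hre : K.re = 0 := by
      by_contra hre
      have hi : K.imI = 0 := by rcases mul_eq_zero.1 h2' with h | h; exact absurd h hre; exact h
      have hj : K.imJ = 0 := by rcases mul_eq_zero.1 h3' with h | h; exact absurd h hre; exact h
      have hk : K.imK = 0 := by rcases mul_eq_zero.1 h4' with h | h; exact absurd h hre; exact h
      nlinarith [sq_nonneg K.re]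
    refine ⟨hre, by nlinarith⟩
  · rintro ⟨h0, h1⟩
    show K ^ 2 = -1
    rw [sq]
    ext <;> simp [Quaternion.re_mul, Quaternion.imI_mul, Quaternion.imJ_mul, Quaternion.imK_mul, h0] <;> nlinarith

lemma qi_mem : qi ∈ Sph := mem_sph_iff.2 ⟨rfl, by norm_num⟩

lemma sph_sq {K : H4} (hK : K ∈ Sph) : K * K = -1 := by rw [← sq]; exact hK

lemma sph_star {K : H4} (hK : K ∈ Sph) : star K = -K := by
  obtain ⟨h0, -⟩ := mem_sph_iff.1 hK
  ext <;> simp [h0]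

/-- embedding of ℂ in the i-slice -/
def ι : ℂ →L[ℝ] H4 where
  toFun z := ⟨z.re, z.im, 0, 0⟩
  map_add' a b := by ext <;> show _ = _ + _ <;> simp
  map_smul' r a := by ext <;> show _ = _ • _ <;> simp
  cont := by
    have h : ∀ z : ℂ, ((z.re : ℝ) : H4) + z.im • qi = (⟨z.re, z.im, 0, 0⟩ : H4) := by
      intro z; ext <;> simp [Quaternion.re_smul]
    exact (((Quaternion.continuous_coe).comp Complex.continuous_re).add
      (Complex.continuous_im.smul continuous_const)).congr h

@[simp] lemma ι_re (z : ℂ) : (ι z).re = z.re := rfl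
@[simp] lemma ι_imI (z : ℂ) : (ι z).imI = z.im := rfl
@[simp] lemma ι_imJ (z : ℂ) : (ι z).imJ = 0 := rfl
@[simp] lemma ι_imK (z : ℂ) : (ι z).imK = 0 := rfl

def c1 : H4 →L[ℝ] ℂ where
  toFun q := ⟨q.re, q.imI⟩
  map_add' a b := by apply Complex.ext <;> simp
  map_smul' r a := by apply Complex.ext <;> simp
  cont := by
    have h : ∀ q : H4, (q.re : ℂ) + q.imI * Complex.I = (⟨q.re, q.imI⟩ : ℂ) := by
      intro q; rw [Complex.mk_eq_add_mul_I]
    exact (((Complex.continuous_ofReal.comp Quaternion.continuous_re)).add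
      (((Complex.continuous_ofReal.comp Quaternion.continuous_imI)).mul continuous_const)).congr h

def c2 : H4 →L[ℝ] ℂ where
  toFun q := ⟨q.imJ, q.imK⟩
  map_add' a b := by apply Complex.ext <;> simp
  map_smul' r a := by apply Complex.ext <;> simp
  cont := by
    have h : ∀ q : H4, (q.imJ : ℂ) + q.imK * Complex.I = (⟨q.imJ, q.imK⟩ : ℂ) := by
      intro q; rw [Complex.mk_eq_add_mul_I]
    exact (((Complex.continuous_ofReal.comp Quaternion.continuous_imJ)).add
      (((Complex.continuous_ofReal.comp Quaternion.continuous_imK)).mul continuous_const)).congr h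

@[simp] lemma c1_re (q : H4) : (c1 q).re = q.re := rfl
@[simp] lemma c1_im (q : H4) : (c1 q).im = q.imI := rfl
@[simp] lemma c2_re (q : H4) : (c2 q).re = q.imJ := rfl
@[simp] lemma c2_im (q : H4) : (c2 q).im = q.imK := rfl

lemma split (q : H4) : q = ι (c1 q) + ι (c2 q) * qj := by
  ext <;> simp [Quaternion.imJ_mul, Quaternion.imK_mul, Quaternion.re_mul, Quaternion.imI_mul]

lemma c1_mul (w : ℂ) (p : H4) : c1 (ι w * p) = w * c1 p := by
  apply Complex.ext <;>
    simp [Quaternion.re_mul, Quaternion.imI_mul, Complex.mul_re, Complex.mul_im]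

lemma c2_mul (w : ℂ) (p : H4) : c2 (ι w * p) = w * c2 p := by
  apply Complex.ext <;>
    simp [Quaternion.imJ_mul, Quaternion.imK_mul, Complex.mul_re, Complex.mul_im]

lemma coe_add_smul (x y : ℝ) (I : H4) (h0 : I.re = 0) :
    (x : H4) + y • I = ⟨x, y * I.imI, y * I.imJ, y * I.imK⟩ := by
  ext <;> simp [h0]

lemma ι_eq (x y : ℝ) : ι ⟨x, y⟩ = (x : H4) + y • qi := by
  ext <;> simp [Quaternion.re_smul]


lemma ι_eq' (z : ℂ) : ι z = (z.re : H4) + z.im • qi := by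
  ext <;> simp

def sIm (q : H4) : ℝ := Real.sqrt (q.imI^2 + q.imJ^2 + q.imK^2)

lemma mem_circ_iff {D : Set ℂ} (hDsym : ∀ z ∈ D, (starRingEnd ℂ) z ∈ D) (q : H4) :
    q ∈ circSet D ↔ (⟨q.re, sIm q⟩ : ℂ) ∈ D := by
  constructor
  · rintro ⟨x, y, I, hI, hD, rfl⟩
    obtain ⟨h0, h1⟩ := mem_sph_iff.1 hI
    have hre : ((x:H4) + y • I).re = x := by simp [h0]
    have hsim : sIm ((x:H4) + y • I) = |y| := by
      simp only [sIm]
      have : ((x:H4) + y • I).imI ^ 2 + ((x:H4) + y • I).imJ ^ 2 + ((x:H4) + y • I).imK ^ 2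
          = y ^ 2 := by
        simp only [Quaternion.imI_add, Quaternion.imJ_add, Quaternion.imK_add,
          Quaternion.imI_smul, Quaternion.imJ_smul, Quaternion.imK_smul,
          Quaternion.imI_coe, Quaternion.imJ_coe, Quaternion.imK_coe, smul_eq_mul]
        ring_nf
        nlinarith [h1]
      rw [this, Real.sqrt_sq_eq_abs]
    rw [hre, hsim]
    rcases le_or_gt 0 y with hy | hy
    · rw [abs_of_nonneg hy]
      have : (⟨x, y⟩ : ℂ) = ↑x + ↑y * Complex.I := Complex.mk_eq_add_mul_I x y
      rw [this]; exact hD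
    · rw [abs_of_neg hy]
      have he : (⟨x, -y⟩ : ℂ) = (starRingEnd ℂ) (↑x + ↑y * Complex.I) := by
        rw [← Complex.mk_eq_add_mul_I]
        apply Complex.ext <;> simp
      rw [he]; exact hDsym _ hD
  · intro h
    rcases eq_or_ne (sIm q) 0 with hs | hs
    · have hsum : q.imI^2 + q.imJ^2 + q.imK^2 = 0 := by
        have := congrArg (fun t => t^2) hs
        simpa [sIm, Real.sq_sqrt (by positivity : (0:ℝ) ≤ q.imI^2 + q.imJ^2 + q.imK^2)] using this
      have hi : q.imI = 0 := by nlinarith [sq_nonneg q.imI, sq_nonneg q.imJ, sq_nonneg q.imK]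
      have hj : q.imJ = 0 := by nlinarith [sq_nonneg q.imI, sq_nonneg q.imJ, sq_nonneg q.imK]
      have hk : q.imK = 0 := by nlinarith [sq_nonneg q.imI, sq_nonneg q.imJ, sq_nonneg q.imK]
      refine ⟨q.re, 0, qi, qi_mem, ?_, ?_⟩
      · rw [← Complex.mk_eq_add_mul_I]
        rw [hs] at h; exact h
      · ext <;> simp [hi, hj, hk]
    · have hpos : 0 < sIm q := lt_of_le_of_ne (Real.sqrt_nonneg _) (Ne.symm hs)
      set s := sIm q with hsdef
      have hs2 : s^2 = q.imI^2 + q.imJ^2 + q.imK^2 :=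
        Real.sq_sqrt (by positivity)
      refine ⟨q.re, s, (⟨0, s⁻¹ * q.imI, s⁻¹ * q.imJ, s⁻¹ * q.imK⟩ : H4), ?_, ?_, ?_⟩
      · refine mem_sph_iff.2 ?_
        refine ⟨rfl, ?_⟩
        show (s⁻¹ * q.imI)^2 + (s⁻¹ * q.imJ)^2 + (s⁻¹ * q.imK)^2 = 1
        field_simp
        linarith [hs2]
      · rw [← Complex.mk_eq_add_mul_I]; exact h
      · ext
        · simp; erw [Quaternion.re_smul]; simp
        · simp; erw [Quaternion.imI_smul]; simp; field_simp
        · simp; erw [Quaternion.imJ_smul]; simp; field_simp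
        · simp; erw [Quaternion.imK_smul]; simp; field_simp
      
lemma circ_open {D : Set ℂ} (hDopen : IsOpen D) (hDsym : ∀ z ∈ D, (starRingEnd ℂ) z ∈ D) :
    IsOpen (circSet D) := by
  have heq : circSet D = (fun q : H4 => (⟨q.re, sIm q⟩ : ℂ)) ⁻¹' D := by
    ext q; exact mem_circ_iff hDsym q
  rw [heq]
  apply IsOpen.preimage ?_ hDopen
  have hcont : Continuous (fun q : H4 => (q.re : ℂ) + (sIm q) * Complex.I) := by
    have hsim : Continuous sIm := by
      apply Real.continuous_sqrt.comp
      exact ((Quaternion.continuous_imI.pow 2).add (Quaternion.continuous_imJ.pow 2)).add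
        (Quaternion.continuous_imK.pow 2)
    exact ((Complex.continuous_ofReal.comp Quaternion.continuous_re)).add
      ((Complex.continuous_ofReal.comp hsim).mul continuous_const)
  exact hcont.congr fun q => by rw [Complex.mk_eq_add_mul_I]

lemma mem_circ_of_mem {D : Set ℂ} {z : ℂ} (hz : z ∈ D) : ι z ∈ circSet D :=
  ⟨z.re, z.im, qi, qi_mem, by rw [Complex.re_add_im]; exact hz, ι_eq' z⟩

lemma hasDerivAt_slices {D : Set ℂ} (hDopen : IsOpen D)
    (hDsym : ∀ z ∈ D, (starRingEnd ℂ) z ∈ D) {f : H4 → H4}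
    (hf : IsSliceRegularOn (circSet D) f) {z : ℂ} (hz : z ∈ D) :
    HasDerivAt (fun w => c1 (f (ι w))) (c1 (fderiv ℝ f (ι z) 1)) z ∧
    HasDerivAt (fun w => c2 (f (ι w))) (c2 (fderiv ℝ f (ι z) 1)) z := by
  have hmem : ι z ∈ circSet D := mem_circ_of_mem hz
  have hO := circ_open hDopen hDsym
  have hfd : DifferentiableAt ℝ f (ι z) := (hf.2.1 _ hmem).differentiableAt (hO.mem_nhds hmem)
  set L := fderiv ℝ f (ι z) with hL
  have hCR : L 1 + qi * L qi = 0 := by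
    have := hf.2.2 z.re z.im qi qi_mem (by rw [← ι_eq']; exact hmem)
    rwa [← ι_eq'] at this
  have hQ : qi * qi = -1 := sph_sq qi_mem
  have hLqi : L qi = qi * L 1 := by
    have h1 : qi * (L 1) + qi * (qi * L qi) = 0 := by
      rw [← mul_add, hCR, mul_zero]
    have h3 : qi * (qi * L qi) = - L qi := by rw [← mul_assoc, hQ]; simp
    rw [h3, add_neg_eq_zero] at h1
    exact h1.symm
  have hLw : ∀ w : ℂ, L (ι w) = ι w * L 1 := by
    intro w
    have hw : ι w = w.re • (1 : H4) + w.im • qi := by ext <;> simp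
    rw [hw, map_add, _root_.map_smul, _root_.map_smul, hLqi, add_mul, smul_mul_assoc, smul_mul_assoc, one_mul]
  have hF : HasFDerivAt (fun w => f (ι w)) (L.comp (ι : ℂ →L[ℝ] H4)) z :=
    (hL ▸ hfd.hasFDerivAt).comp z (ι.hasFDerivAt)
  constructor
  · have hc1F : HasFDerivAt (fun w => c1 (f (ι w))) (c1.comp (L.comp (ι : ℂ →L[ℝ] H4))) z :=
      c1.hasFDerivAt.comp z hF
    have key : ContinuousLinearMap.restrictScalars ℝ
          (ContinuousLinearMap.smulRight (1 : ℂ →L[ℂ] ℂ) (c1 (L 1)))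
        = c1.comp (L.comp (ι : ℂ →L[ℝ] H4)) := by
      apply ContinuousLinearMap.ext; intro w
      show (w • c1 (L 1) : ℂ) = c1 (L (ι w))
      rw [hLw w, c1_mul, smul_eq_mul]
    have := (hasFDerivAt_of_restrictScalars (𝕜 := ℝ) hc1F key).hasDerivAt
    simpa using this
  · have hc2F : HasFDerivAt (fun w => c2 (f (ι w))) (c2.comp (L.comp (ι : ℂ →L[ℝ] H4))) z :=
      c2.hasFDerivAt.comp z hF
    have key : ContinuousLinearMap.restrictScalars ℝ
          (ContinuousLinearMap.smulRight (1 : ℂ →L[ℂ] ℂ) (c2 (L 1)))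
        = c2.comp (L.comp (ι : ℂ →L[ℝ] H4)) := by
      apply ContinuousLinearMap.ext; intro w
      show (w • c2 (L 1) : ℂ) = c2 (L (ι w))
      rw [hLw w, c2_mul, smul_eq_mul]
    have := (hasFDerivAt_of_restrictScalars (𝕜 := ℝ) hc2F key).hasDerivAt
    simpa using this

lemma hasDerivAt_conj_conj {g : ℂ → ℂ} {m w : ℂ} (h : HasDerivAt g m ((starRingEnd ℂ) w)) :
    HasDerivAt (fun z => (starRingEnd ℂ) (g ((starRingEnd ℂ) z))) ((starRingEnd ℂ) m) w := by
  have hconj : ∀ u : ℂ, HasFDerivAt (fun z : ℂ => (starRingEnd ℂ) z)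
      (Complex.conjCLE.toContinuousLinearMap) u := fun u => Complex.conjCLE.hasFDerivAt
  have hmid : HasFDerivAt (fun z => g ((starRingEnd ℂ) z))
      ((ContinuousLinearMap.restrictScalars ℝ
        (ContinuousLinearMap.smulRight (1 : ℂ →L[ℂ] ℂ) m)).comp
        Complex.conjCLE.toContinuousLinearMap) w :=
    (h.hasFDerivAt.restrictScalars ℝ).comp w (hconj w)
  have hfull : HasFDerivAt (fun z => (starRingEnd ℂ) (g ((starRingEnd ℂ) z)))
      (Complex.conjCLE.toContinuousLinearMap.comp
        ((ContinuousLinearMap.restrictScalars ℝ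
          (ContinuousLinearMap.smulRight (1 : ℂ →L[ℂ] ℂ) m)).comp
          Complex.conjCLE.toContinuousLinearMap)) w :=
    (hconj _).comp w hmid
  have key : ContinuousLinearMap.restrictScalars ℝ
        (ContinuousLinearMap.smulRight (1 : ℂ →L[ℂ] ℂ) ((starRingEnd ℂ) m))
      = Complex.conjCLE.toContinuousLinearMap.comp
        ((ContinuousLinearMap.restrictScalars ℝ
          (ContinuousLinearMap.smulRight (1 : ℂ →L[ℂ] ℂ) m)).comp
          Complex.conjCLE.toContinuousLinearMap) := by
    apply ContinuousLinearMap.ext; intro w'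
    show (w' • (starRingEnd ℂ) m : ℂ)
        = (starRingEnd ℂ) (((starRingEnd ℂ) w') • m)
    simp [smul_eq_mul, map_mul, Complex.conj_conj]
  have := (hasFDerivAt_of_restrictScalars (𝕜 := ℝ) hfull key).hasDerivAt
  simpa using this


lemma two_ne' : (2 : H4) ≠ 0 := by
  have h : ((2:ℝ) : H4) = (2 : H4) := by norm_cast
  intro h0
  rw [← h] at h0
  have h1 : ((2:ℝ) : H4) = ((0:ℝ) : H4) := by rw [h0]; norm_cast
  have : (2:ℝ) = 0 := Quaternion.coe_injective h1
  norm_num at this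

lemma pairing (X Y : H4) :
    c1 X * (starRingEnd ℂ) (c1 Y) + c2 X * (starRingEnd ℂ) (c2 Y) = c1 (X * star Y) := by
  apply Complex.ext <;>
    simp [Complex.add_re, Complex.add_im, Complex.mul_re, Complex.mul_im,
      Quaternion.re_mul, Quaternion.imI_mul] <;> ring

lemma zero_pair {A B K : H4} (hK : K ∈ Sph)
    (h : (1 - K * qi) / 2 * A + (1 + K * qi) / 2 * B = 0) :
    c1 A * (starRingEnd ℂ) (c1 B) + c2 A * (starRingEnd ℂ) (c2 B) = 0 := by
  have hK2 : K * K = -1 := sph_sq hK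
  have hKs : star K = -K := sph_star hK
  have hQ : qi * qi = -1 := sph_sq qi_mem
  have hqs : star qi = -qi := sph_star qi_mem
  have hcomm : ∀ x : H4, 2 * (x / 2) = x := by
    intro x
    rw [← mul_div_assoc, two_mul, ← mul_two, mul_div_cancel_right₀ _ two_ne']
  have h2 : (1 - K * qi) * A + (1 + K * qi) * B = 0 := by
    have hh := congrArg (fun t : H4 => 2 * t) h
    simp only [mul_add, mul_zero] at hh
    rw [← mul_assoc, ← mul_assoc, hcomm, hcomm] at hh
    exact hh
  set u := A - B with hu
  have hX : 2 * A = u + (K * qi) * u := by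
    have e : 2 * A - (u + (K * qi) * u) = (1 - K * qi) * A + (1 + K * qi) * B := by
      rw [hu]; noncomm_ring
    have e0 : 2 * A - (u + (K * qi) * u) = 0 := by rw [e, h2]
    exact sub_eq_zero.mp e0
  have hY : 2 * B = (K * qi) * u - u := by
    have e : 2 * B - ((K * qi) * u - u) = (1 - K * qi) * A + (1 + K * qi) * B := by
      rw [hu]; noncomm_ring
    have e0 : 2 * B - ((K * qi) * u - u) = 0 := by rw [e, h2]
    exact sub_eq_zero.mp e0
  have hstarY : star (2 * B) = star u * (qi * K) - star u := by
    rw [hY, star_sub, star_mul, star_mul, hKs, hqs]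
    noncomm_ring
  have h5 : K * (qi * qi) * K = 1 := by
    rw [hQ, mul_neg_one, neg_mul, hK2, neg_neg]
  have hbrack : (1 + K * qi) * (qi * K - 1) = qi * K - K * qi := by
    calc (1 + K * qi) * (qi * K - 1)
        = qi * K + K * (qi * qi) * K - 1 - K * qi := by noncomm_ring
      _ = qi * K + 1 - 1 - K * qi := by rw [h5]
      _ = qi * K - K * qi := by noncomm_ring
  have hc : u * star u = ((normSq u : ℝ) : H4) := Quaternion.self_mul_star u
  have hprod : (2 * A) * star (2 * B) = ((normSq u : ℝ) : H4) * (qi * K - K * qi) := by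
    rw [hX, hstarY]
    calc (u + (K * qi) * u) * (star u * (qi * K) - star u)
        = (1 + K * qi) * (u * star u) * (qi * K - 1) := by noncomm_ring
      _ = (1 + K * qi) * ((normSq u : ℝ) : H4) * (qi * K - 1) := by rw [hc]
      _ = ((normSq u : ℝ) : H4) * ((1 + K * qi) * (qi * K - 1)) := by
          rw [← Quaternion.coe_commutes, mul_assoc]
      _ = ((normSq u : ℝ) : H4) * (qi * K - K * qi) := by rw [hbrack]
  have hc1 : c1 ((2 * A) * star (2 * B)) = 0 := by
    rw [hprod]
    apply Complex.ext <;>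
      simp [Quaternion.re_mul, Quaternion.imI_mul, Quaternion.re_sub, Quaternion.imI_sub]
  have hp := pairing (2 * A) (2 * B)
  rw [hc1] at hp
  have hc12 : ∀ q : H4, c1 (2 * q) = 2 * c1 q := by
    intro q; rw [two_mul, map_add, two_mul]
  have hc22 : ∀ q : H4, c2 (2 * q) = 2 * c2 q := by
    intro q; rw [two_mul, map_add, two_mul]
  rw [hc12, hc12, hc22, hc22] at hp
  have h4 : (4 : ℂ) * (c1 A * (starRingEnd ℂ) (c1 B) + c2 A * (starRingEnd ℂ) (c2 B)) = 0 := by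
    rw [← hp]; simp only [map_mul, map_ofNat]; ring
  have := mul_eq_zero.mp h4
  rcases this with h | h
  · exact absurd h (by norm_num)
  · exact h


lemma ι_conj (z : ℂ) : ι ((starRingEnd ℂ) z) = (z.re : H4) - z.im • qi := by
  have h1 := ι_eq' ((starRingEnd ℂ) z)
  rw [h1]
  simp [sub_eq_add_neg]


end Work

open Work

/-- identity principle from a converging sequence of spheres each
containing a zero. -/
theorem stmt_19 (D : Set ℂ) (hDopen : IsOpen D) (hDconn : IsConnected D)
    (hDsym : ∀ z ∈ D, (starRingEnd ℂ) z ∈ D) (hDR : ∃ x : ℝ, (x : ℂ) ∈ D)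
    (f : H4 → H4) (hf : IsSliceRegularOn (circSet D) f)
    (p : ℕ → ℂ) (hpD : ∀ n, p n ∈ D) (hpinj : Function.Injective p)
    (z₀ : ℂ) (hz : z₀ ∈ D) (hlim : Filter.Tendsto p Filter.atTop (nhds z₀))
    (hzero : ∀ n, ∃ I ∈ Sph, f (((p n).re : H4) + (p n).im • I) = 0) :
    ∀ q ∈ circSet D, f q = 0 := by
  classical
  set g1 : ℂ → ℂ := fun z => c1 (f (ι z)) with hg1def
  set g2 : ℂ → ℂ := fun z => c2 (f (ι z)) with hg2def
  -- differentiability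
  have hd1 : ∀ z ∈ D, DifferentiableAt ℂ g1 z := fun z hzD =>
    ((hasDerivAt_slices hDopen hDsym hf hzD).1).differentiableAt
  have hd2 : ∀ z ∈ D, DifferentiableAt ℂ g2 z := fun z hzD =>
    ((hasDerivAt_slices hDopen hDsym hf hzD).2).differentiableAt
  set g3 : ℂ → ℂ := fun z => (starRingEnd ℂ) (g1 ((starRingEnd ℂ) z)) with hg3def
  set g4 : ℂ → ℂ := fun z => (starRingEnd ℂ) (g2 ((starRingEnd ℂ) z)) with hg4def
  have hd3 : ∀ z ∈ D, DifferentiableAt ℂ g3 z := fun z hzD =>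
    (hasDerivAt_conj_conj ((hasDerivAt_slices hDopen hDsym hf (hDsym z hzD)).1)).differentiableAt
  have hd4 : ∀ z ∈ D, DifferentiableAt ℂ g4 z := fun z hzD =>
    (hasDerivAt_conj_conj ((hasDerivAt_slices hDopen hDsym hf (hDsym z hzD)).2)).differentiableAt
  set n : ℂ → ℂ := fun z => g1 z * g3 z + g2 z * g4 z with hndef
  have hnd : DifferentiableOn ℂ n D := fun z hzD =>
    (((hd1 z hzD).mul (hd3 z hzD)).add ((hd2 z hzD).mul (hd4 z hzD))).differentiableWithinAt
  have hna : AnalyticOnNhd ℂ n D := hnd.analyticOnNhd hDopen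
  have hg1d : DifferentiableOn ℂ g1 D := fun z hzD => (hd1 z hzD).differentiableWithinAt
  have hg2d : DifferentiableOn ℂ g2 D := fun z hzD => (hd2 z hzD).differentiableWithinAt
  have hg1a : AnalyticOnNhd ℂ g1 D := hg1d.analyticOnNhd hDopen
  have hg2a : AnalyticOnNhd ℂ g2 D := hg2d.analyticOnNhd hDopen
  -- n vanishes on the sequence
  have hnp : ∀ k, n (p k) = 0 := by
    intro k
    obtain ⟨K, hK, h0⟩ := hzero k
    set z := p k with hzk
    have hmemI : ((z.re : ℝ) : H4) + z.im • qi ∈ circSet D := by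
      rw [← ι_eq']; exact mem_circ_of_mem (hpD k)
    have hs := hf.1 z.re z.im qi qi_mem K hK hmemI
    rw [h0] at hs
    have hrel : (1 - K * qi) / 2 * f (ι z) + (1 + K * qi) / 2 * f (ι ((starRingEnd ℂ) z)) = 0 := by
      rw [ι_eq', ι_conj]; exact hs.symm
    have := zero_pair hK hrel
    simpa [hndef, hg1def, hg2def, hg3def, hg4def] using this
  -- identity principle for n at z₀
  have hPre : IsPreconnected D := hDconn.isPreconnected
  have hne : ∀ᶠ k in atTop, p k ≠ z₀ := by
    by_cases hex : ∃ k0, p k0 = z₀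
    · obtain ⟨k0, hk0⟩ := hex
      filter_upwards [eventually_gt_atTop k0] with k hk
      intro hbad
      exact hk.ne' (hpinj (hbad.trans hk0.symm))
    · exact Eventually.of_forall fun k hbad => hex ⟨k, hbad⟩
  have htend : Tendsto p atTop (nhdsWithin z₀ {z₀}ᶜ) :=
    tendsto_nhdsWithin_iff.2 ⟨hlim, hne⟩
  have hfreq : ∃ᶠ w in nhdsWithin z₀ {z₀}ᶜ, n w = 0 :=
    htend.frequently (Frequently.of_forall fun k => hnp k)
  have hn0 : Set.EqOn n 0 D :=
    hna.eqOn_zero_of_preconnected_of_frequently_eq_zero hPre hz hfreq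
  -- deduce g1 g2 vanish near a real point
  obtain ⟨x₀, hx₀⟩ := hDR
  obtain ⟨ε, hε, hball⟩ := Metric.isOpen_iff.1 hDopen _ hx₀
  set q : ℕ → ℂ := fun m => ((x₀ + ε / (m + 2) : ℝ) : ℂ) with hqdef
  have htm : ∀ m : ℕ, 0 < ε / ((m : ℝ) + 2) := fun m => div_pos hε (by positivity)
  have hqD : ∀ m, q m ∈ D := by
    intro m
    apply hball
    rw [Metric.mem_ball]
    have hd : dist (q m) ((x₀ : ℝ) : ℂ) = |ε / ((m : ℝ) + 2)| := by
      have := Complex.isometry_ofReal.dist_eq (x₀ + ε / ((m : ℝ) + 2)) x₀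
      rw [show q m = ((x₀ + ε / ((m : ℝ) + 2) : ℝ) : ℂ) from rfl, this, Real.dist_eq,
        add_sub_cancel_left]
    rw [hd, abs_of_pos (htm m)]
    calc ε / ((m : ℝ) + 2) ≤ ε / 2 := by
          apply div_le_div_of_nonneg_left (le_of_lt hε) (by norm_num) (by linarith [Nat.cast_nonneg (α := ℝ) m])
      _ < ε := by linarith
  have hg1q : ∀ m, g1 (q m) = 0 ∧ g2 (q m) = 0 := by
    intro m
    have h0 := hn0 (hqD m)
    have hconjq : (starRingEnd ℂ) (q m) = q m := Complex.conj_ofReal _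
    have : g1 (q m) * (starRingEnd ℂ) (g1 (q m)) + g2 (q m) * (starRingEnd ℂ) (g2 (q m)) = 0 := by
      simpa [hndef, hg3def, hg4def, hconjq] using h0
    rw [Complex.mul_conj, Complex.mul_conj, ← Complex.ofReal_add] at this
    have hre : Complex.normSq (g1 (q m)) + Complex.normSq (g2 (q m)) = 0 := by
      exact_mod_cast this
    constructor
    · rw [← Complex.normSq_eq_zero]
      nlinarith [Complex.normSq_nonneg (g1 (q m)), Complex.normSq_nonneg (g2 (q m))]
    · rw [← Complex.normSq_eq_zero]
      nlinarith [Complex.normSq_nonneg (g1 (q m)), Complex.normSq_nonneg (g2 (q m))]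
  -- identity principle for g1, g2 at x₀
  have hqlim : Tendsto q atTop (nhds ((x₀ : ℝ) : ℂ)) := by
    rw [hqdef]
    have h1 : Tendsto (fun m : ℕ => ε / ((m : ℝ) + 2)) atTop (nhds 0) :=
      Tendsto.div_atTop tendsto_const_nhds
        (tendsto_atTop_add_const_right _ 2 tendsto_natCast_atTop_atTop)
    have h2 : Tendsto (fun m : ℕ => x₀ + ε / ((m : ℝ) + 2)) atTop (nhds x₀) := by
      have h3 := (tendsto_const_nhds : Tendsto (fun _ : ℕ => x₀) atTop (nhds x₀)).add h1
      simpa using h3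
    exact (Complex.continuous_ofReal.tendsto _).comp h2
  have hqne : ∀ m, q m ≠ ((x₀ : ℝ) : ℂ) := by
    intro m hbad
    have : x₀ + ε / ((m : ℝ) + 2) = x₀ := Complex.ofReal_injective hbad
    linarith [htm m]
  have hqtend : Tendsto q atTop (nhdsWithin ((x₀ : ℝ) : ℂ) {((x₀ : ℝ) : ℂ)}ᶜ) :=
    tendsto_nhdsWithin_iff.2 ⟨hqlim, Eventually.of_forall hqne⟩
  have hg1zero : Set.EqOn g1 0 D :=
    hg1a.eqOn_zero_of_preconnected_of_frequently_eq_zero hPre hx₀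
      (hqtend.frequently (Frequently.of_forall fun m => (hg1q m).1))
  have hg2zero : Set.EqOn g2 0 D :=
    hg2a.eqOn_zero_of_preconnected_of_frequently_eq_zero hPre hx₀
      (hqtend.frequently (Frequently.of_forall fun m => (hg1q m).2))
  -- f vanishes on the i-slice over D
  have hF0 : ∀ z ∈ D, f (ι z) = 0 := by
    intro z hzD
    have h1 : c1 (f (ι z)) = 0 := hg1zero hzD
    have h2 : c2 (f (ι z)) = 0 := hg2zero hzD
    have := split (f (ι z))
    rw [h1, h2, map_zero, zero_mul, add_zero] at this
    exact this
  -- conclude everywhere by the representation formula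
  rintro w ⟨x, y, I, hI, hzD, rfl⟩
  have hmemI : ((x : ℝ) : H4) + y • qi ∈ circSet D := ⟨x, y, qi, qi_mem, hzD, rfl⟩
  have hs := hf.1 x y qi qi_mem I hI hmemI
  have hz1 : ((x : ℝ) : H4) + y • qi = ι ⟨x, y⟩ := by
    rw [ι_eq']
  have hz2 : ((x : ℝ) : H4) - y • qi = ι ((starRingEnd ℂ) ⟨x, y⟩) := by
    rw [ι_conj]
  have hmemD : (⟨x, y⟩ : ℂ) ∈ D := by rw [Complex.mk_eq_add_mul_I]; exact hzD
  rw [hz1, hz2, hF0 _ hmemD, hF0 _ (hDsym _ hmemD), mul_zero, mul_zero, add_zero] at hs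
  exact hs
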